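/- arXiv:1310.4638 — 4 statements merged into one kernel-verified Lean document; each statement's English description precedes it below -/
import Mathlib

section
/- A point y ∈ Q+ is weakly extremal in Q+ (i.e., there is no y' ∈ Q+ with y' < y in all coordinates) if and only if y is a boundary point of Q+. -/
open Filter Set Topology

theorem exists_forall_lt_of_mem_interior {ι : Type*} {s : Set (ι → ℝ)} {y : ι → ℝ}
    (hy : y ∈ interior s) : ∃ x ∈ s, ∀ i, x i < y i := by
  have hshift : Tendsto (fun t : ℝ => y - Function.const ι t) (𝓝[>] 0) (𝓝 y) := by
    have : Continuous (fun t : ℝ => y - Function.const ι t) := by fun_prop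
    simpa using (this.tendsto 0).mono_left nhdsWithin_le_nhds
  obtain ⟨t, hts, ht⟩ :=
    ((hshift.eventually (mem_interior_iff_mem_nhds.1 hy)).and self_mem_nhdsWithin).exists
  exact ⟨_, hts, fun i => sub_lt_self (y i) ht⟩

theorem IsUpperSet.mem_interior_iff_exists_forall_lt {ι : Type*} [Finite ι]
    {s : Set (ι → ℝ)} (hs : IsUpperSet s) {y : ι → ℝ} :
    y ∈ interior s ↔ ∃ x ∈ s, ∀ i, x i < y i :=
  ⟨exists_forall_lt_of_mem_interior,
    fun ⟨_, hx, hlt⟩ => hs.mem_interior_of_forall_lt (subset_closure hx) hlt⟩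

theorem stmt_2_general (p : ℕ) (Q : Set (Fin p → ℝ))
    (Qp : Set (Fin p → ℝ)) (hQp : Qp = {y : Fin p → ℝ | ∃ y' ∈ Q, y' ≤ y})
    (y : Fin p → ℝ) (hy : y ∈ Qp) :
    (¬ ∃ y' ∈ Qp, ∀ i, y' i < y i) ↔ y ∈ frontier Qp := by
  have hup : IsUpperSet Qp := by
    rw [hQp]
    exact fun _ _ hab ⟨y', hy', hle⟩ => ⟨y', hy', hle.trans hab⟩
  rw [mem_frontier_iff_notMem_interior hy, hup.mem_interior_iff_exists_forall_lt]

theorem stmt_2 (p : ℕ) (Q : Set (Fin p → ℝ)) (hQne : Q.Nonempty)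
    (hQcl : IsClosed Q) (hQcv : Convex ℝ Q)
    (Qp : Set (Fin p → ℝ)) (hQp : Qp = {y : Fin p → ℝ | ∃ y' ∈ Q, y' ≤ y})
    (y : Fin p → ℝ) (hy : y ∈ Qp) :
    (¬ ∃ y' ∈ Qp, ∀ i, y' i < y i) ↔ y ∈ frontier Qp :=
  stmt_2_general p Q Qp hQp y hy
end

section
/- Under the hypotheses of the previous LP setting, if v̂ is optimal for the dual problem with d·v̂ = 1, v̂ ≥ 0 and b·û + q·v̂ = λ̂, then min{x·(Pᵀv̂) : Ax = b, x ≥ 0} = q·v̂ − λ̂. -/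
/-!
Weak duality for the subproblem gives the lower bound: for `Ax = b`, `x ≥ 0`, dual feasibility
of `(û, v̂)` yields `x ⬝ (Pᵀv̂) ≥ -x ⬝ (Aᵀû) = -b ⬝ û = q ⬝ v̂ - λ̂`. A primal optimal `x̂`
attains it, since `Px̂ ≤ q - λ̂d`, `v̂ ≥ 0` and `d ⬝ v̂ = 1` give `x̂ ⬝ (Pᵀv̂) ≤ q ⬝ v̂ - λ̂`.
-/

open Matrix

section

variable {R ι κ ρ : Type*} [CommRing R] [PartialOrder R] [IsOrderedRing R]
  [Fintype ι] [Fintype κ] [Fintype ρ]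
  {A : Matrix ι κ R} {P : Matrix ρ κ R} {x : κ → R} {b u : ι → R} {q d v : ρ → R}

lemma neg_dotProduct_le_dotProduct_transpose_mulVec (hx : 0 ≤ x) (hAx : A *ᵥ x = b)
    (hfeas : 0 ≤ Aᵀ *ᵥ u + Pᵀ *ᵥ v) : -(b ⬝ᵥ u) ≤ x ⬝ᵥ (Pᵀ *ᵥ v) := by
  have h := dotProduct_nonneg_of_nonneg hx hfeas
  rw [dotProduct_add, dotProduct_transpose_mulVec A x u, hAx, dotProduct_comm] at h
  exact neg_le_iff_add_nonneg'.mpr h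

lemma dotProduct_transpose_mulVec_le_sub {l : R} (hPx : P *ᵥ x ≤ q - l • d) (hv : 0 ≤ v)
    (hdv : d ⬝ᵥ v = 1) : x ⬝ᵥ (Pᵀ *ᵥ v) ≤ q ⬝ᵥ v - l :=
  calc x ⬝ᵥ (Pᵀ *ᵥ v) = (P *ᵥ x) ⬝ᵥ v := by rw [dotProduct_transpose_mulVec, dotProduct_comm]
    _ ≤ (q - l • d) ⬝ᵥ v := dotProduct_le_dotProduct_of_nonneg_right hPx hv
    _ = q ⬝ᵥ v - l := by rw [sub_dotProduct, smul_dotProduct, hdv, smul_eq_mul, mul_one]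

end

theorem stmt_6_general (m n p : ℕ)
    (A : Matrix (Fin m) (Fin n) ℝ) (P : Matrix (Fin p) (Fin n) ℝ)
    (b : Fin m → ℝ) (q d : Fin p → ℝ)
    (lam : ℝ)
    -- lam is the optimal value of the primal LP  max{λ : q − λd ≥ Px, Ax = b, x ≥ 0},
    -- attained at some (lam, xhat)
    (hprimal : IsGreatest
      {l : ℝ | ∃ x : Fin n → ℝ, 0 ≤ x ∧ A *ᵥ x = b ∧ P *ᵥ x ≤ q - l • d} lam)
    (uhat : Fin m → ℝ) (vhat : Fin p → ℝ)
    -- (uhat, vhat) is optimal for the dual LP  min{b·u + q·v : Aᵀu + Pᵀv ≥ 0, d·v = 1, v ≥ 0}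
    (hdfeas : 0 ≤ Aᵀ *ᵥ uhat + Pᵀ *ᵥ vhat) (hdv : d ⬝ᵥ vhat = 1) (hvpos : 0 ≤ vhat)
    (hdval : b ⬝ᵥ uhat + q ⬝ᵥ vhat = lam) :
    IsLeast {r : ℝ | ∃ x : Fin n → ℝ, 0 ≤ x ∧ A *ᵥ x = b ∧ r = x ⬝ᵥ (Pᵀ *ᵥ vhat)}
      (q ⬝ᵥ vhat - lam) := by
  have lower : ∀ x : Fin n → ℝ, 0 ≤ x → A *ᵥ x = b → q ⬝ᵥ vhat - lam ≤ x ⬝ᵥ (Pᵀ *ᵥ vhat) :=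
    fun x hx hAx => by
      linarith [neg_dotProduct_le_dotProduct_transpose_mulVec hx hAx hdfeas]
  obtain ⟨xhat, hx, hAx, hPx⟩ := hprimal.1
  refine ⟨⟨xhat, hx, hAx, ?_⟩, ?_⟩
  · exact le_antisymm (lower xhat hx hAx) (dotProduct_transpose_mulVec_le_sub hPx hvpos hdv)
  · rintro r ⟨x, hx, hAx, rfl⟩
    exact lower x hx hAx

theorem stmt_6 (m n p : ℕ)
    (A : Matrix (Fin m) (Fin n) ℝ) (P : Matrix (Fin p) (Fin n) ℝ)
    (b : Fin m → ℝ) (q d : Fin p → ℝ)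
    (lam : ℝ)
    -- lam is the optimal value of the primal LP  max{λ : q − λd ≥ Px, Ax = b, x ≥ 0},
    -- attained at some (lam, xhat)
    (hprimal : IsGreatest
      {l : ℝ | ∃ x : Fin n → ℝ, 0 ≤ x ∧ A *ᵥ x = b ∧ P *ᵥ x ≤ q - l • d} lam)
    (uhat : Fin m → ℝ) (vhat : Fin p → ℝ)
    -- (uhat, vhat) is optimal for the dual LP  min{b·u + q·v : Aᵀu + Pᵀv ≥ 0, d·v = 1, v ≥ 0}
    (hdfeas : 0 ≤ Aᵀ *ᵥ uhat + Pᵀ *ᵥ vhat) (hdv : d ⬝ᵥ vhat = 1) (hvpos : 0 ≤ vhat)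
    (hdopt : ∀ (u : Fin m → ℝ) (v : Fin p → ℝ),
      0 ≤ Aᵀ *ᵥ u + Pᵀ *ᵥ v → d ⬝ᵥ v = 1 → 0 ≤ v → lam ≤ b ⬝ᵥ u + q ⬝ᵥ v)
    (hdval : b ⬝ᵥ uhat + q ⬝ᵥ vhat = lam) :
    IsLeast {r : ℝ | ∃ x : Fin n → ℝ, 0 ≤ x ∧ A *ᵥ x = b ∧ r = x ⬝ᵥ (Pᵀ *ᵥ vhat)}
      (q ⬝ᵥ vhat - lam) :=
  stmt_6_general m n p A P b q d lam hprimal uhat vhat hdfeas hdv hvpos hdval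
end

section
/- All monotonicity inequalities H(X_A) ≤ H(X_B) for A ⊆ B ⊆ I follow, for monotone submodular set functions, from the elemental ones with B = I and |I \ A| = 1; more precisely: if f is a set function on subsets of a finite set I satisfying f(A∪B)+f(A∩B) ≤ f(A)+f(B) for all A, B with |A\(A∩B)| = |B\(A∩B)| = 1, and f(A) ≤ f(I) whenever |I\A| = 1, then f(A) ≤ f(B) for all A ⊆ B. -/
theorem stmt_12 {I : Type*} [Fintype I] [DecidableEq I] (f : Finset I → ℝ)
    -- elemental submodularity: A and B each contain exactly one element not in A ∩ B
    (hsub : ∀ A B : Finset I, (A \ (A ∩ B)).card = 1 → (B \ (A ∩ B)).card = 1 →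
      f (A ∪ B) + f (A ∩ B) ≤ f A + f B)
    -- elemental monotonicity: A misses exactly one element of I
    (hmono : ∀ A : Finset I, (Finset.univ \ A).card = 1 → f A ≤ f Finset.univ) :
    ∀ A B : Finset I, A ⊆ B → f A ≤ f B := by
  have key : ∀ n : ℕ, ∀ B : Finset I, (Finset.univ \ B).card = n →
      ∀ x ∈ B, f (B.erase x) ≤ f B := by
    intro n
    induction n with
    | zero =>
      intro B hB x hx
      have hBu : B = Finset.univ := by
        have h0 : Finset.univ \ B = ∅ := Finset.card_eq_zero.mp hB
        apply Finset.eq_univ_of_forall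
        intro z
        by_contra hz
        have : z ∈ Finset.univ \ B := Finset.mem_sdiff.mpr ⟨Finset.mem_univ z, hz⟩
        simp [h0] at this
      subst hBu
      have : (Finset.univ \ Finset.univ.erase x) = {x} := by
        ext z; simp [Finset.mem_erase]
      exact hmono _ (by rw [this]; simp)
    | succ n ih =>
      intro B hB x hx
      obtain ⟨y, hy⟩ : (Finset.univ \ B).Nonempty := by
        rw [← Finset.card_pos, hB]; omega
      have hyB : y ∉ B := (Finset.mem_sdiff.mp hy).2
      have hxy : x ≠ y := fun h => hyB (h ▸ hx)
      set B' := insert y (B.erase x) with hB'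
      have hcap : B ∩ B' = B.erase x := by
        ext z
        simp only [hB', Finset.mem_inter, Finset.mem_insert, Finset.mem_erase]
        constructor
        · rintro ⟨hz, h | h⟩
          · exact absurd (h ▸ hz) hyB
          · exact h
        · rintro ⟨hzx, hz⟩; exact ⟨hz, Or.inr ⟨hzx, hz⟩⟩
      have hun : B ∪ B' = insert y B := by
        ext z
        simp only [hB', Finset.mem_union, Finset.mem_insert, Finset.mem_erase]
        constructor
        · rintro (h | h | ⟨_, h⟩) <;> tauto
        · rintro (h | h) <;> tauto
      have h1 : (B \ (B ∩ B')).card = 1 := by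
        rw [hcap]
        have : B \ B.erase x = {x} := by
          ext z
          simp only [Finset.mem_sdiff, Finset.mem_erase, Finset.mem_singleton]
          constructor
          · rintro ⟨hz, h⟩; by_contra hne; exact h ⟨hne, hz⟩
          · rintro rfl; exact ⟨hx, fun h => h.1 rfl⟩
        rw [this]; simp
      have h2 : (B' \ (B ∩ B')).card = 1 := by
        rw [hcap]
        have : B' \ B.erase x = {y} := by
          ext z
          simp only [hB', Finset.mem_sdiff, Finset.mem_insert, Finset.mem_erase,
            Finset.mem_singleton]
          constructor
          · rintro ⟨h | h, h2⟩
            · exact h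
            · exact absurd h h2
          · rintro rfl; exact ⟨Or.inl rfl, fun h => hyB h.2⟩
        rw [this]; simp
      have hsub' := hsub B B' h1 h2
      rw [hun, hcap] at hsub'
      have hcard : (Finset.univ \ insert y B).card = n := by
        rw [Finset.sdiff_insert, Finset.card_erase_of_mem hy, hB]
        omega
      have hih := ih (insert y B) hcard x (Finset.mem_insert_of_mem hx)
      rw [Finset.erase_insert_of_ne hxy.symm] at hih
      rw [← hB'] at hih
      linarith
  have main : ∀ k : ℕ, ∀ A B : Finset I, A ⊆ B → (B \ A).card = k → f A ≤ f B := by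
    intro k
    induction k with
    | zero =>
      intro A B hAB h0
      have : B \ A = ∅ := Finset.card_eq_zero.mp h0
      have hBA : A = B := Finset.Subset.antisymm hAB (fun z hz => by
        by_contra hzA
        have hmem : z ∈ B \ A := Finset.mem_sdiff.mpr ⟨hz, hzA⟩
        rw [this] at hmem
        exact absurd hmem (Finset.notMem_empty z))
      rw [hBA]
    | succ k ih =>
      intro A B hAB hk
      obtain ⟨x, hx⟩ : (B \ A).Nonempty := by rw [← Finset.card_pos, hk]; omega
      obtain ⟨hxB, hxA⟩ := Finset.mem_sdiff.mp hx
      have hsubset : A ⊆ B.erase x := fun z hz =>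
        Finset.mem_erase.mpr ⟨fun h => hxA (h ▸ hz), hAB hz⟩
      have hcard : (B.erase x \ A).card = k := by
        have : B.erase x \ A = (B \ A).erase x := by
          ext z; simp [Finset.mem_erase, Finset.mem_sdiff]; tauto
        rw [this, Finset.card_erase_of_mem hx, hk]
        omega
      calc f A ≤ f (B.erase x) := ih A (B.erase x) hsubset hcard
        _ ≤ f B := key _ B rfl x hxB
  intro A B hAB
  exact main _ A B hAB rfl
end

section
/- The closure of the entropy region Γ*_N in R^{2^N−1} is a convex cone: it is closed under addition and under multiplication by nonnegative scalars. -/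
/-- The probability of an event on a finite probability space given by a mass function. -/
noncomputable def probOf {Ω : Type*} [Fintype Ω] (μ : Ω → ℝ) (E : Set Ω) : ℝ :=
  ∑ ω : Ω, E.indicator μ ω

/-- The Shannon entropy of (the distribution of) a random variable `f` on a
finite probability space with mass function `μ`. -/
noncomputable def entropy {Ω α : Type*} [Fintype Ω] [Fintype α] (μ : Ω → ℝ) (f : Ω → α) : ℝ :=
  ∑ a : α, -(probOf μ {ω | f ω = a} * Real.log (probOf μ {ω | f ω = a}))

/-- The entropy region `Γ*_N`: the set of all vectors, indexed by the nonempty subsets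
`A` of `{1,…,N}`, of joint entropies `H(X_A)` of `N` discrete random variables
on a finite probability space. -/
def entropyRegion (N : ℕ) : Set ({A : Finset (Fin N) // A.Nonempty} → ℝ) :=
  {h | ∃ (k : ℕ) (μ : Fin k → ℝ) (l : ℕ) (X : Fin N → Fin k → Fin l),
    (∀ ω, 0 ≤ μ ω) ∧ (∑ ω : Fin k, μ ω = 1) ∧
    ∀ A : {A : Finset (Fin N) // A.Nonempty},
      h A = entropy μ (fun ω => fun i : A.1 => X i ω)}

open Finset Real

lemma probOf_eq_sum {Ω α : Type*} [Fintype Ω] [DecidableEq α] (μ : Ω → ℝ) (f : Ω → α) (a : α) :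
    probOf μ {ω | f ω = a} = ∑ ω : Ω, if f ω = a then μ ω else 0 := by
  unfold probOf
  refine Finset.sum_congr rfl fun ω _ => ?_
  simp [Set.indicator_apply]

lemma sum_probOf {Ω α : Type*} [Fintype Ω] [Fintype α] (μ : Ω → ℝ) (f : Ω → α) :
    ∑ a : α, probOf μ {ω | f ω = a} = ∑ ω : Ω, μ ω := by
  classical
  simp_rw [probOf_eq_sum]
  rw [Finset.sum_comm]
  simp

lemma probOf_empty {Ω : Type*} [Fintype Ω] (μ : Ω → ℝ) : probOf μ (∅ : Set Ω) = 0 := by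
  simp [probOf]

lemma entropy_comp_injective {Ω α β : Type*} [Fintype Ω] [Fintype α] [Fintype β]
    (μ : Ω → ℝ) (f : Ω → α) (j : α → β) (hj : Function.Injective j) :
    entropy μ (fun ω => j (f ω)) = entropy μ f := by
  classical
  unfold entropy
  have h1 : ∀ a : α, probOf μ {ω | j (f ω) = j a} = probOf μ {ω | f ω = a} := by
    intro a
    congr 1
    ext ω
    simp [hj.eq_iff]
  calc ∑ b : β, -(probOf μ {ω | j (f ω) = b} * Real.log (probOf μ {ω | j (f ω) = b}))
      = ∑ b ∈ Finset.univ.image j,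
          -(probOf μ {ω | j (f ω) = b} * Real.log (probOf μ {ω | j (f ω) = b})) := by
        refine (Finset.sum_subset (Finset.subset_univ _) ?_).symm
        intro b _ hb
        have he : {ω | j (f ω) = b} = (∅ : Set Ω) := by
          ext ω
          simp only [Set.mem_setOf_eq, Set.mem_empty_iff_false, iff_false]
          intro h
          exact hb (Finset.mem_image.2 ⟨f ω, Finset.mem_univ _, h⟩)
        rw [he, probOf_empty]
        simp
    _ = ∑ a : α, -(probOf μ {ω | j (f ω) = j a} * Real.log (probOf μ {ω | j (f ω) = j a})) :=
        Finset.sum_image (fun x _ y _ h => hj h)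
    _ = ∑ a : α, -(probOf μ {ω | f ω = a} * Real.log (probOf μ {ω | f ω = a})) := by
        exact Finset.sum_congr rfl fun a _ => by rw [h1]

lemma entropy_comp_equiv {Ω Ω' α : Type*} [Fintype Ω] [Fintype Ω'] [Fintype α]
    (e : Ω' ≃ Ω) (μ : Ω → ℝ) (f : Ω → α) :
    entropy (fun ω' => μ (e ω')) (fun ω' => f (e ω')) = entropy μ f := by
  classical
  unfold entropy
  refine Finset.sum_congr rfl fun a _ => ?_
  have : probOf (fun ω' => μ (e ω')) {ω' | f (e ω') = a} = probOf μ {ω | f ω = a} := by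
    rw [probOf_eq_sum, probOf_eq_sum]
    exact Fintype.sum_equiv e _ _ fun ω' => rfl
  rw [this]

lemma probOf_prod {Ω Ω' α β : Type*} [Fintype Ω] [Fintype Ω'] [Fintype α] [Fintype β]
    (μ : Ω → ℝ) (ν : Ω' → ℝ) (f : Ω → α) (g : Ω' → β) (a : α) (b : β) :
    probOf (fun ω : Ω × Ω' => μ ω.1 * ν ω.2) {ω : Ω × Ω' | (f ω.1, g ω.2) = (a, b)}
      = probOf μ {ω | f ω = a} * probOf ν {ω | g ω = b} := by
  classical
  have : ∀ ω : Ω × Ω', ((f ω.1, g ω.2) = (a, b)) ↔ (f ω.1 = a ∧ g ω.2 = b) := by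
    intro ω; rw [Prod.ext_iff]
  rw [probOf_eq_sum, probOf_eq_sum, probOf_eq_sum, Finset.sum_mul_sum]
  rw [Fintype.sum_prod_type]
  refine Finset.sum_congr rfl fun ω₁ _ => Finset.sum_congr rfl fun ω₂ _ => ?_
  by_cases h1 : f ω₁ = a <;> by_cases h2 : g ω₂ = b <;> simp [Prod.ext_iff, h1, h2]

lemma entropy_prod {Ω Ω' α β : Type*} [Fintype Ω] [Fintype Ω'] [Fintype α] [Fintype β]
    (μ : Ω → ℝ) (ν : Ω' → ℝ) (hμ1 : ∑ ω : Ω, μ ω = 1) (hν1 : ∑ ω : Ω', ν ω = 1)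
    (f : Ω → α) (g : Ω' → β) :
    entropy (fun ω : Ω × Ω' => μ ω.1 * ν ω.2) (fun ω : Ω × Ω' => (f ω.1, g ω.2))
      = entropy μ f + entropy ν g := by
  classical
  unfold entropy
  rw [Fintype.sum_prod_type]
  have key : ∀ (a : α) (b : β),
      -(probOf (fun ω : Ω × Ω' => μ ω.1 * ν ω.2) {ω : Ω × Ω' | (fun ω : Ω × Ω' => (f ω.1, g ω.2)) ω = (a, b)} *
        Real.log (probOf (fun ω : Ω × Ω' => μ ω.1 * ν ω.2) {ω : Ω × Ω' | (fun ω : Ω × Ω' => (f ω.1, g ω.2)) ω = (a, b)}))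
      = probOf ν {ω | g ω = b} * -(probOf μ {ω | f ω = a} * Real.log (probOf μ {ω | f ω = a}))
        + probOf μ {ω | f ω = a} * -(probOf ν {ω | g ω = b} * Real.log (probOf ν {ω | g ω = b})) := by
    intro a b
    rw [show {ω : Ω × Ω' | (fun ω : Ω × Ω' => (f ω.1, g ω.2)) ω = (a, b)}
        = {ω : Ω × Ω' | (f ω.1, g ω.2) = (a, b)} from rfl, probOf_prod]
    set p := probOf μ {ω | f ω = a}
    set q := probOf ν {ω | g ω = b}
    rcases eq_or_ne p 0 with hp | hp
    · simp [hp]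
    rcases eq_or_ne q 0 with hq | hq
    · simp [hq]
    rw [Real.log_mul hp hq]; ring
  calc ∑ a : α, ∑ b : β, -(probOf (fun ω : Ω × Ω' => μ ω.1 * ν ω.2) {ω : Ω × Ω' | (fun ω : Ω × Ω' => (f ω.1, g ω.2)) ω = (a, b)} *
        Real.log (probOf (fun ω : Ω × Ω' => μ ω.1 * ν ω.2) {ω : Ω × Ω' | (fun ω : Ω × Ω' => (f ω.1, g ω.2)) ω = (a, b)}))
      = ∑ a : α, ∑ b : β,
          (probOf ν {ω | g ω = b} * -(probOf μ {ω | f ω = a} * Real.log (probOf μ {ω | f ω = a}))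
          + probOf μ {ω | f ω = a} * -(probOf ν {ω | g ω = b} * Real.log (probOf ν {ω | g ω = b}))) := by
        exact Finset.sum_congr rfl fun a _ => Finset.sum_congr rfl fun b _ => key a b
    _ = ∑ a : α, -(probOf μ {ω | f ω = a} * Real.log (probOf μ {ω | f ω = a}))
        + ∑ b : β, -(probOf ν {ω | g ω = b} * Real.log (probOf ν {ω | g ω = b})) := by
        have hq : ∑ b : β, probOf ν {ω | g ω = b} = 1 := by rw [sum_probOf, hν1]
        have hp : ∑ a : α, probOf μ {ω | f ω = a} = 1 := by rw [sum_probOf, hμ1]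
        simp_rw [Finset.sum_add_distrib, ← Finset.sum_mul, ← Finset.mul_sum, hq]
        rw [one_mul, ← Finset.sum_mul, hp, one_mul]

lemma add_mem_entropyRegion {N : ℕ} {h h' : {A : Finset (Fin N) // A.Nonempty} → ℝ}
    (hh : h ∈ entropyRegion N) (hh' : h' ∈ entropyRegion N) :
    h + h' ∈ entropyRegion N := by
  obtain ⟨k, μ, l, X, hμ0, hμ1, hX⟩ := hh
  obtain ⟨k', μ', l', X', hμ0', hμ1', hX'⟩ := hh'
  classical
  set e : Fin (k * k') ≃ Fin k × Fin k' := finProdFinEquiv.symm with he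
  refine ⟨k * k', fun ω => μ (e ω).1 * μ' (e ω).2, l * l',
    fun i ω => finProdFinEquiv (X i (e ω).1, X' i (e ω).2), ?_, ?_, ?_⟩
  · intro ω; exact mul_nonneg (hμ0 _) (hμ0' _)
  · rw [Equiv.sum_comp e (fun p : Fin k × Fin k' => μ p.1 * μ' p.2)]
    rw [Fintype.sum_prod_type, ← Finset.sum_mul_sum, hμ1, hμ1', one_mul]
  · intro A
    rw [Pi.add_apply, hX A, hX' A]
    -- transport along e
    have step1 : entropy (fun ω => μ (e ω).1 * μ' (e ω).2)
        (fun ω => fun i : A.1 => finProdFinEquiv (X i (e ω).1, X' i (e ω).2))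
        = entropy (fun p : Fin k × Fin k' => μ p.1 * μ' p.2)
          (fun p : Fin k × Fin k' => fun i : A.1 => finProdFinEquiv (X i p.1, X' i p.2)) :=
      entropy_comp_equiv e (fun p : Fin k × Fin k' => μ p.1 * μ' p.2)
        (fun p : Fin k × Fin k' => fun i : A.1 => finProdFinEquiv (X i p.1, X' i p.2))
    rw [step1]
    -- transport the codomain
    set j : (A.1 → Fin l) × (A.1 → Fin l') → (A.1 → Fin (l * l')) :=
      fun pr => fun i => finProdFinEquiv (pr.1 i, pr.2 i) with hj
    have hjinj : Function.Injective j := by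
      intro pr pr' hpr
      have : ∀ i : A.1, (pr.1 i, pr.2 i) = (pr'.1 i, pr'.2 i) := by
        intro i
        exact finProdFinEquiv.injective (congrFun hpr i)
      refine Prod.ext_iff.2 ⟨funext fun i => ?_, funext fun i => ?_⟩
      · exact (Prod.ext_iff.1 (this i)).1
      · exact (Prod.ext_iff.1 (this i)).2
    have step2 : entropy (fun p : Fin k × Fin k' => μ p.1 * μ' p.2)
        (fun p : Fin k × Fin k' => j ((fun i : A.1 => X i p.1), (fun i : A.1 => X' i p.2)))
        = entropy (fun p : Fin k × Fin k' => μ p.1 * μ' p.2)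
          (fun p : Fin k × Fin k' => ((fun i : A.1 => X i p.1), (fun i : A.1 => X' i p.2))) :=
      entropy_comp_injective _ _ j hjinj
    have step3 := entropy_prod μ μ' hμ1 hμ1'
      (fun ω => fun i : A.1 => X i ω) (fun ω => fun i : A.1 => X' i ω)
    rw [← step3, ← step2]

lemma zero_mem_entropyRegion (N : ℕ) : (0 : {A : Finset (Fin N) // A.Nonempty} → ℝ) ∈ entropyRegion N := by
  refine ⟨1, fun _ => 1, 1, fun _ _ => 0, fun _ => zero_le_one, by simp, ?_⟩
  intro A
  have h1 : ∀ a : (A.1 → Fin 1),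
      probOf (fun _ : Fin 1 => (1:ℝ)) {ω : Fin 1 | (fun i : A.1 => (0:Fin 1)) = a} = 1 := by
    intro a
    have : {ω : Fin 1 | (fun i : A.1 => (0:Fin 1)) = a} = Set.univ := by
      ext ω
      simp [Subsingleton.elim (fun i : A.1 => (0:Fin 1)) a]
    rw [this]
    simp [probOf]
  unfold entropy
  rw [Finset.sum_congr rfl (fun a _ => by rw [h1 a])]
  simp

lemma nsmul_mem_entropyRegion {N : ℕ} {h : {A : Finset (Fin N) // A.Nonempty} → ℝ}
    (hh : h ∈ entropyRegion N) : ∀ n : ℕ, n • h ∈ entropyRegion N := by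
  intro n
  induction n with
  | zero => simpa using zero_mem_entropyRegion N
  | succ n ih =>
    rw [succ_nsmul]
    exact add_mem_entropyRegion ih hh

lemma smul_add_const_mem_entropyRegion {N : ℕ} {h : {A : Finset (Fin N) // A.Nonempty} → ℝ}
    (hh : h ∈ entropyRegion N) {lam : ℝ} (h0 : 0 < lam) (h1 : lam < 1) :
    (fun A => lam * h A + (-(lam * Real.log lam) - (1 - lam) * Real.log (1 - lam)))
      ∈ entropyRegion N := by
  classical
  obtain ⟨k, μ, l, X, hμ0, hμ1, hX⟩ := hh
  refine ⟨k + 1, Fin.lastCases (1 - lam) (fun ω => lam * μ ω), l + 1,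
    fun i => Fin.lastCases (Fin.last l) (fun ω => (X i ω).castSucc), ?_, ?_, ?_⟩
  · intro ω
    induction ω using Fin.lastCases with
    | last => simp [le_of_lt (sub_pos.2 h1)]
    | cast ω => simp [mul_nonneg (le_of_lt h0) (hμ0 ω)]
  · rw [Fin.sum_univ_castSucc]
    simp only [Fin.lastCases_last, Fin.lastCases_castSucc]
    rw [← Finset.mul_sum, hμ1]
    ring
  · intro A
    dsimp only
    rw [hX A]
    -- abbreviations
    set μ' : Fin (k + 1) → ℝ := Fin.lastCases (1 - lam) (fun ω => lam * μ ω) with hμ'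
    set g : Fin (k + 1) → Option (A.1 → Fin l) :=
      Fin.lastCases none (fun ω => some (fun i : A.1 => X i ω)) with hg
    set j : Option (A.1 → Fin l) → (A.1 → Fin (l + 1)) :=
      fun o => Option.elim o (fun _ => Fin.last l) (fun a => fun i => (a i).castSucc) with hjdef
    have hjinj : Function.Injective j := by
      intro o o' he
      obtain ⟨i0, hi0⟩ := A.2
      match o, o' with
      | none, none => rfl
      | none, some a =>
        exfalso
        have := congrFun he ⟨i0, hi0⟩
        simp only [hjdef, Option.elim] at this
        exact (Fin.castSucc_lt_last (a ⟨i0, hi0⟩)).ne' this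
      | some a, none =>
        exfalso
        have := congrFun he ⟨i0, hi0⟩
        simp only [hjdef, Option.elim] at this
        exact (Fin.castSucc_lt_last (a ⟨i0, hi0⟩)).ne this
      | some a, some a' =>
        congr 1
        funext i
        have := congrFun he i
        simp only [hjdef, Option.elim] at this
        exact Fin.castSucc_injective l this
    have hfun : (fun ω => fun i : A.1 =>
        (fun i => Fin.lastCases (Fin.last l) (fun ω => (X i ω).castSucc) : Fin N → Fin (k+1) → Fin (l+1)) i ω)
        = fun ω => j (g ω) := by
      funext ω
      induction ω using Fin.lastCases with
      | last => simp [hg, hjdef]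
      | cast ω => simp [hg, hjdef]
    rw [hfun, entropy_comp_injective μ' g j hjinj]
    -- compute entropy of g
    have hnone : probOf μ' {ω | g ω = none} = 1 - lam := by
      rw [probOf_eq_sum, Fin.sum_univ_castSucc]
      simp [hg, hμ']
    have hsome : ∀ b : A.1 → Fin l,
        probOf μ' {ω | g ω = some b} = lam * probOf μ {ω | (fun i : A.1 => X i ω) = b} := by
      intro b
      rw [probOf_eq_sum, probOf_eq_sum, Fin.sum_univ_castSucc]
      simp only [hg, hμ', Fin.lastCases_castSucc, Fin.lastCases_last, Option.some.injEq,
        reduceCtorEq, if_false, add_zero]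
      rw [Finset.mul_sum]
      refine Finset.sum_congr rfl fun ω _ => ?_
      by_cases hb : (fun i : A.1 => X i ω) = b <;> simp [hb]
    unfold entropy
    rw [Fintype.sum_option]
    simp only [hnone]
    have hterm : ∀ b : A.1 → Fin l,
        -(probOf μ' {ω | g ω = some b} * Real.log (probOf μ' {ω | g ω = some b}))
        = lam * -(probOf μ {ω | (fun i : A.1 => X i ω) = b} *
            Real.log (probOf μ {ω | (fun i : A.1 => X i ω) = b}))
          - (lam * probOf μ {ω | (fun i : A.1 => X i ω) = b}) * Real.log lam := by
      intro b
      rw [hsome b]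
      set p := probOf μ {ω | (fun i : A.1 => X i ω) = b}
      rcases eq_or_ne p 0 with hp | hp
      · simp [hp]
      rw [Real.log_mul (ne_of_gt h0) hp]
      ring
    rw [Finset.sum_congr rfl fun b _ => hterm b]
    rw [Finset.sum_sub_distrib, ← Finset.mul_sum, ← Finset.sum_mul, ← Finset.mul_sum,
      sum_probOf, hμ1]
    ring

lemma smul_mem_closure_entropyRegion {N : ℕ} {c : ℝ} (hc : 0 < c)
    {h : {A : Finset (Fin N) // A.Nonempty} → ℝ} (hh : h ∈ entropyRegion N) :
    c • h ∈ closure (entropyRegion N) := by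
  set bent : ℝ → ℝ := fun x => -(x * Real.log x) - (1 - x) * Real.log (1 - x) with hbent
  have hcont : Continuous bent := by
    have h1 : Continuous fun x : ℝ => x * Real.log x := Real.continuous_mul_log
    have h2 : Continuous fun x : ℝ => (1 - x) * Real.log (1 - x) :=
      h1.comp (continuous_const.sub continuous_id)
    exact (h1.neg).sub h2
  have hlim : Filter.Tendsto (fun n : ℕ => bent (c / n)) Filter.atTop (nhds 0) := by
    have hdiv : Filter.Tendsto (fun n : ℕ => c / (n : ℝ)) Filter.atTop (nhds 0) :=
      Filter.Tendsto.div_atTop tendsto_const_nhds tendsto_natCast_atTop_atTop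
    have := (hcont.tendsto 0).comp hdiv
    have hb0 : bent 0 = 0 := by simp [hbent]
    rwa [hb0] at this
  apply mem_closure_of_tendsto (f := fun n : ℕ =>
    (fun A => c * h A + bent (c / n) : {A : Finset (Fin N) // A.Nonempty} → ℝ))
    (b := Filter.atTop)
  · rw [tendsto_pi_nhds]
    intro A
    have : Filter.Tendsto (fun n : ℕ => c * h A + bent (c / n)) Filter.atTop
        (nhds (c * h A + 0)) := tendsto_const_nhds.add hlim
    simpa using this
  · filter_upwards [tendsto_natCast_atTop_atTop.eventually_gt_atTop c] with n hn
    have hnpos : (0 : ℝ) < n := lt_trans hc hn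
    have hlam0 : 0 < c / (n : ℝ) := div_pos hc hnpos
    have hlam1 : c / (n : ℝ) < 1 := (div_lt_one hnpos).2 hn
    have := smul_add_const_mem_entropyRegion (nsmul_mem_entropyRegion hh n) hlam0 hlam1
    convert this using 1
    funext A
    have : c / (n : ℝ) * ((n • h) A) = c * h A := by
      rw [Pi.smul_apply, nsmul_eq_mul]
      field_simp
    rw [← this]

theorem stmt_16 (N : ℕ) :
    (∀ h ∈ closure (entropyRegion N), ∀ h' ∈ closure (entropyRegion N),
      h + h' ∈ closure (entropyRegion N)) ∧
    (∀ c : ℝ, 0 ≤ c → ∀ h ∈ closure (entropyRegion N),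
      c • h ∈ closure (entropyRegion N)) := by
  constructor
  · intro h hh h' hh'
    exact map_mem_closure₂ continuous_add hh hh'
      (fun a ha b hb => add_mem_entropyRegion ha hb)
  · intro c hc h hh
    rcases eq_or_lt_of_le hc with rfl | hc
    · rw [zero_smul]
      exact subset_closure (zero_mem_entropyRegion N)
    · have hmaps : Set.MapsTo (fun x => c • x) (entropyRegion N) (closure (entropyRegion N)) :=
        fun a ha => smul_mem_closure_entropyRegion hc ha
      have := map_mem_closure (continuous_const_smul c) hh hmaps
      rwa [closure_closure] at this
end
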